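/- arXiv:2103.01423 — 4 statements merged into one kernel-verified Lean document; each statement's English description precedes it below -/
import Mathlib

section
/- Let m be a positive even integer and let B : Fin m × Fin m → ℂ be any function. Define the hafnian-type sum L = ∑ over all perfect matchings q of {0,...,m-1} of ∏_{(j,k)∈q, j<k} B(j,k). Then L · (m/2)! equals the alternating sum ∑_{T ⊆ {0,...,m-1}, |T| ≤ m-2} (-1)^{|T|} (Q_T)^{m/2}, where Q_T = ∑_{i<j, i∉T, j∉T} B(i,j). -/
open scoped Classical
open Finset

lemma alt_sum_pow_C {α : Type*} [DecidableEq α] (s : Finset α) :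
    ∑ t ∈ s.powerset, (-1 : ℂ) ^ t.card = if s = ∅ then 1 else 0 := by
  have := Finset.sum_powerset_neg_one_pow_card (x := s)
  have h2 : ((∑ t ∈ s.powerset, (-1 : ℤ) ^ t.card : ℤ) : ℂ)
      = ∑ t ∈ s.powerset, (-1 : ℂ) ^ t.card := by push_cast; rfl
  rw [← h2, this]
  split <;> simp

-- key injectivity lemma
lemma psi_inj (m n : ℕ) (hmn : m = 2 * n) (g : Fin n → Fin m × Fin m)
    (hlt : ∀ k, (g k).1 < (g k).2)
    (hcov : ∀ i : Fin m, ∃ k, i = (g k).1 ∨ i = (g k).2) :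
    Function.Injective (fun kb : Fin n × Bool => if kb.2 then (g kb.1).1 else (g kb.1).2) := by
  set ψ := fun kb : Fin n × Bool => if kb.2 then (g kb.1).1 else (g kb.1).2 with hψ
  have hsurj : Function.Surjective ψ := by
    intro i
    obtain ⟨k, hk | hk⟩ := hcov i
    · exact ⟨(k, true), hk.symm⟩
    · exact ⟨(k, false), hk.symm⟩
  have hcard : Fintype.card (Fin n × Bool) = Fintype.card (Fin m) := by
    simp [hmn]; ring
  exact ((Fintype.bijective_iff_surjective_and_card ψ).2 ⟨hsurj, hcard⟩).1

lemma matching_card (m : ℕ) (q : Finset (Fin m × Fin m)) (hlt : ∀ p ∈ q, p.1 < p.2)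
    (hq : ∀ i : Fin m, ∃! p, p ∈ q ∧ (i = p.1 ∨ i = p.2)) : 2 * q.card = m := by
  classical
  choose F hF using fun i => (hq i).exists
  have key : ∀ p ∈ q, (univ.filter (fun i => F i = p)) = {p.1, p.2} := by
    intro p hp
    ext i
    simp only [mem_filter, mem_univ, true_and, mem_insert, mem_singleton]
    constructor
    · rintro rfl
      exact (hF i).2
    · intro hi
      exact (hq i).unique (hF i) ⟨hp, by tauto⟩
  have h1 : (univ : Finset (Fin m)).card = ∑ p ∈ q, (univ.filter (fun i => F i = p)).card :=
    Finset.card_eq_sum_card_fiberwise (fun i _ => (hF i).1)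
  have h2 : ∀ p ∈ q, (univ.filter (fun i => F i = p)).card = 2 := by
    intro p hp
    rw [key p hp, Finset.card_insert_of_notMem (by simp [(hlt p hp).ne]), Finset.card_singleton]
  rw [Finset.sum_congr rfl h2, Finset.sum_const, smul_eq_mul] at h1
  simp only [Finset.card_univ, Fintype.card_fin] at h1
  omega

lemma g_injective (m n : ℕ) (hmn : m = 2 * n) (g : Fin n → Fin m × Fin m)
    (hlt : ∀ k, (g k).1 < (g k).2)
    (hcov : ∀ i : Fin m, ∃ k, i = (g k).1 ∨ i = (g k).2) : Function.Injective g := by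
  intro k k' h
  have := psi_inj m n hmn g hlt hcov (a₁ := (k, true)) (a₂ := (k', true)) (by simp [h])
  simpa using congrArg Prod.fst this

lemma fiber_card (m n : ℕ) (hmn : m = 2 * n)
    (q : Finset (Fin m × Fin m)) (hlt : ∀ p ∈ q, p.1 < p.2)
    (hq : ∀ i : Fin m, ∃! p, p ∈ q ∧ (i = p.1 ∨ i = p.2)) :
    ((Fintype.piFinset (fun _ : Fin n => univ.filter (fun p : Fin m × Fin m => p.1 < p.2))).filter
      (fun g => (univ.filter (fun i : Fin m => ∀ k, i ≠ (g k).1 ∧ i ≠ (g k).2)) = ∅ ∧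
        Finset.image g univ = q)).card = Nat.factorial n := by
  classical
  have hqcard : q.card = n := by have := matching_card m q hlt hq; omega
  have hcard_coe : Fintype.card {x // x ∈ q} = n := by simp [hqcard]
  rw [Finset.card_bij' (i := fun g hg => (⟨fun k => (⟨g k, by
        have himg := (Finset.mem_filter.1 hg).2.2
        exact himg ▸ Finset.mem_image_of_mem g (mem_univ k)⟩ : {x // x ∈ q}), by
      intro k k' h
      have hg' := Finset.mem_filter.1 hg
      have hglt : ∀ k, (g k).1 < (g k).2 := by
        intro k
        have := Fintype.mem_piFinset.1 hg'.1 k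
        simpa using this
      have hcov : ∀ i : Fin m, ∃ k, i = (g k).1 ∨ i = (g k).2 := by
        intro i
        by_contra hc
        push_neg at hc
        have : i ∈ (univ.filter (fun i : Fin m => ∀ k, i ≠ (g k).1 ∧ i ≠ (g k).2)) := by
          simp only [mem_filter, mem_univ, true_and]
          intro k; exact ⟨hc k |>.1, hc k |>.2⟩
        rw [hg'.2.1] at this
        exact absurd this (Finset.notMem_empty i)
      exact g_injective m n hmn g hglt hcov (Subtype.ext_iff.1 h)⟩ : Fin n ↪ {x // x ∈ q}))
    (j := fun e _ => fun k => ((e k : {x // x ∈ q}) : Fin m × Fin m))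
    (t := (univ : Finset (Fin n ↪ {x // x ∈ q})))]
  · simp [Fintype.card_embedding_eq, hcard_coe, Nat.descFactorial_self]
  · intro g hg; exact mem_univ _
  · -- j e ∈ fiber
    intro e _
    have hesurj : Function.Surjective e := by
      have := (Fintype.bijective_iff_injective_and_card e).2 ⟨e.injective, by simp [hcard_coe]⟩
      exact this.2
    refine Finset.mem_filter.2 ⟨?_, ?_, ?_⟩
    · refine Fintype.mem_piFinset.2 fun k => ?_
      simp only [mem_filter, mem_univ, true_and]
      exact hlt _ (e k).2
    · rw [Finset.filter_eq_empty_iff]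
      intro i _
      push_neg
      obtain ⟨p, ⟨hpq, hip⟩, -⟩ := hq i
      obtain ⟨k, hk⟩ := hesurj ⟨p, hpq⟩
      refine ⟨k, ?_⟩
      rw [hk]
      intro h1
      simp only at h1 ⊢
      tauto
    · apply Finset.eq_of_subset_of_card_le
      · intro p hp
        obtain ⟨k, -, rfl⟩ := Finset.mem_image.1 hp
        exact (e k).2
      · rw [Finset.card_image_of_injective _ (fun k k' h => e.injective (Subtype.ext h)),
          hqcard, Finset.card_univ, Fintype.card_fin]
  · intro g hg; rfl
  · intro e _; ext k : 1; rfl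

/-- Inclusion-exclusion formula for the hafnian-type sum over perfect matchings
(Theorem 2.2 of the paper). -/
theorem hafnian_inclusion_exclusion (m : ℕ) (hm : 0 < m) (hme : Even m)
    (B : Fin m × Fin m → ℂ) :
    (∑ q ∈ Finset.univ.filter (fun q : Finset (Fin m × Fin m) =>
        (∀ p ∈ q, p.1 < p.2) ∧ ∀ i : Fin m, ∃! p, p ∈ q ∧ (i = p.1 ∨ i = p.2)),
      ∏ p ∈ q, B p) * (Nat.factorial (m / 2) : ℂ) =
    ∑ T ∈ Finset.univ.filter (fun T : Finset (Fin m) => T.card ≤ m - 2),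
      (-1 : ℂ) ^ T.card *
        (∑ p ∈ Finset.univ.filter (fun p : Fin m × Fin m =>
            p.1 < p.2 ∧ p.1 ∉ T ∧ p.2 ∉ T), B p) ^ (m / 2) := by
  classical
  obtain ⟨n', hn'⟩ := hme
  set n := m / 2 with hn
  have hmn : m = 2 * n := by omega
  have hn0 : n ≠ 0 := by omega
  -- Step 1: extend T-sum to all subsets
  have step1 : (∑ T ∈ Finset.univ.filter (fun T : Finset (Fin m) => T.card ≤ m - 2),
      (-1 : ℂ) ^ T.card *
        (∑ p ∈ Finset.univ.filter (fun p : Fin m × Fin m =>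
            p.1 < p.2 ∧ p.1 ∉ T ∧ p.2 ∉ T), B p) ^ n) =
      ∑ T : Finset (Fin m),
      (-1 : ℂ) ^ T.card *
        (∑ p ∈ Finset.univ.filter (fun p : Fin m × Fin m =>
            p.1 < p.2 ∧ p.1 ∉ T ∧ p.2 ∉ T), B p) ^ n := by
    apply Finset.sum_subset (Finset.filter_subset _ _)
    intro T _ hT
    rw [Finset.mem_filter] at hT
    push_neg at hT
    have hTcard : m - 2 < T.card := hT (mem_univ T)
    have hempty : Finset.univ.filter (fun p : Fin m × Fin m =>
        p.1 < p.2 ∧ p.1 ∉ T ∧ p.2 ∉ T) = ∅ := by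
      rw [Finset.filter_eq_empty_iff]
      rintro p _ ⟨h1, h2, h3⟩
      have hsub : ({p.1, p.2} : Finset (Fin m)) ⊆ Tᶜ := by
        intro x hx
        simp only [mem_insert, mem_singleton] at hx
        rcases hx with rfl | rfl <;> simp [Finset.mem_compl, h2, h3]
      have h2c : ({p.1, p.2} : Finset (Fin m)).card = 2 := by
        rw [Finset.card_insert_of_notMem (by simp [h1.ne]), Finset.card_singleton]
      have := Finset.card_le_card hsub
      rw [h2c, Finset.card_compl, Fintype.card_fin] at this
      have hTle : T.card ≤ m := by
        simpa using Finset.card_le_univ T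
      omega
    rw [hempty, Finset.sum_empty, zero_pow hn0, mul_zero]
  rw [step1]
  -- Step 2: expand powers
  have step2 : ∀ T : Finset (Fin m),
      (∑ p ∈ Finset.univ.filter (fun p : Fin m × Fin m =>
            p.1 < p.2 ∧ p.1 ∉ T ∧ p.2 ∉ T), B p) ^ n =
      ∑ g ∈ Fintype.piFinset (fun _ : Fin n => Finset.univ.filter (fun p : Fin m × Fin m =>
            p.1 < p.2 ∧ p.1 ∉ T ∧ p.2 ∉ T)), ∏ k, B (g k) := by
    intro T
    rw [← Finset.prod_univ_sum]
    rw [Finset.prod_const, Finset.card_univ, Fintype.card_fin]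
  simp only [step2]
  -- Step 3: restriction via filter over the full pair set
  have hpi : ∀ T : Finset (Fin m),
      Fintype.piFinset (fun _ : Fin n => Finset.univ.filter (fun p : Fin m × Fin m =>
        p.1 < p.2 ∧ p.1 ∉ T ∧ p.2 ∉ T)) =
      (Fintype.piFinset (fun _ : Fin n =>
        Finset.univ.filter (fun p : Fin m × Fin m => p.1 < p.2))).filter
        (fun g => T ⊆ Finset.univ.filter (fun i : Fin m => ∀ k, i ≠ (g k).1 ∧ i ≠ (g k).2)) := by
    intro T
    ext g
    simp only [Fintype.mem_piFinset, Finset.mem_filter, Finset.mem_univ, true_and,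
      Finset.subset_iff]
    constructor
    · intro h
      refine ⟨fun k => (h k).1, fun i hi k => ⟨?_, ?_⟩⟩
      · rintro rfl; exact (h k).2.1 hi
      · rintro rfl; exact (h k).2.2 hi
    · rintro ⟨h1, h2⟩ k
      exact ⟨h1 k, fun hT => (h2 hT k).1 rfl, fun hT => (h2 hT k).2 rfl⟩
  simp only [hpi]
  have step3 : ∀ T : Finset (Fin m),
      (-1 : ℂ) ^ T.card * ∑ g ∈ (Fintype.piFinset (fun _ : Fin n =>
        Finset.univ.filter (fun p : Fin m × Fin m => p.1 < p.2))).filter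
        (fun g => T ⊆ Finset.univ.filter (fun i : Fin m => ∀ k, i ≠ (g k).1 ∧ i ≠ (g k).2)),
        ∏ k, B (g k) =
      ∑ g ∈ Fintype.piFinset (fun _ : Fin n =>
        Finset.univ.filter (fun p : Fin m × Fin m => p.1 < p.2)),
        if T ⊆ Finset.univ.filter (fun i : Fin m => ∀ k, i ≠ (g k).1 ∧ i ≠ (g k).2) then
          (-1 : ℂ) ^ T.card * ∏ k, B (g k) else 0 := by
    intro T
    rw [Finset.mul_sum, Finset.sum_filter]
  simp only [step3]
  rw [Finset.sum_comm]
  have step4 : ∀ g : Fin n → Fin m × Fin m,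
      (∑ T : Finset (Fin m),
        if T ⊆ Finset.univ.filter (fun i : Fin m => ∀ k, i ≠ (g k).1 ∧ i ≠ (g k).2) then
          (-1 : ℂ) ^ T.card * ∏ k, B (g k) else 0) =
      (if Finset.univ.filter (fun i : Fin m => ∀ k, i ≠ (g k).1 ∧ i ≠ (g k).2) = ∅ then
        (1 : ℂ) else 0) * ∏ k, B (g k) := by
    intro g
    have h1 : (∑ T : Finset (Fin m),
        if T ⊆ Finset.univ.filter (fun i : Fin m => ∀ k, i ≠ (g k).1 ∧ i ≠ (g k).2) then
          (-1 : ℂ) ^ T.card * ∏ k, B (g k) else 0) =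
        ∑ T ∈ (Finset.univ.filter
            (fun i : Fin m => ∀ k, i ≠ (g k).1 ∧ i ≠ (g k).2)).powerset,
          (-1 : ℂ) ^ T.card * ∏ k, B (g k) := by
      rw [← Finset.sum_filter]
      congr 1
      ext T
      simp [Finset.mem_powerset]
    rw [h1, ← Finset.sum_mul, alt_sum_pow_C]
  simp only [step4, ite_mul, one_mul, zero_mul]
  rw [← Finset.sum_filter]
  -- Step 5: fiber over perfect matchings
  have hmaps : ∀ g ∈ (Fintype.piFinset (fun _ : Fin n =>
      Finset.univ.filter (fun p : Fin m × Fin m => p.1 < p.2))).filter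
      (fun g => Finset.univ.filter (fun i : Fin m => ∀ k, i ≠ (g k).1 ∧ i ≠ (g k).2) = ∅),
      Finset.image g Finset.univ ∈ Finset.univ.filter (fun q : Finset (Fin m × Fin m) =>
        (∀ p ∈ q, p.1 < p.2) ∧ ∀ i : Fin m, ∃! p, p ∈ q ∧ (i = p.1 ∨ i = p.2)) := by
    intro g hg
    rw [Finset.mem_filter] at hg
    have hglt : ∀ k, (g k).1 < (g k).2 := by
      intro k
      have := Fintype.mem_piFinset.1 hg.1 k
      simpa using this
    have hcov : ∀ i : Fin m, ∃ k, i = (g k).1 ∨ i = (g k).2 := by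
      intro i
      by_contra hc
      push_neg at hc
      have : i ∈ Finset.univ.filter (fun i : Fin m => ∀ k, i ≠ (g k).1 ∧ i ≠ (g k).2) := by
        simp only [Finset.mem_filter, Finset.mem_univ, true_and]
        exact fun k => ⟨(hc k).1, (hc k).2⟩
      rw [hg.2] at this
      exact absurd this (Finset.notMem_empty i)
    have hinj := psi_inj m n hmn g hglt hcov
    refine Finset.mem_filter.2 ⟨Finset.mem_univ _, ?_, ?_⟩
    · intro p hp
      obtain ⟨k, -, rfl⟩ := Finset.mem_image.1 hp
      exact hglt k
    · intro i
      obtain ⟨k, hk⟩ := hcov i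
      refine ⟨g k, ⟨Finset.mem_image_of_mem g (Finset.mem_univ k), hk⟩, ?_⟩
      rintro p ⟨hp, hip⟩
      obtain ⟨k', -, rfl⟩ := Finset.mem_image.1 hp
      have : k' = k := by
        rcases hip with h1 | h1 <;> rcases hk with h2 | h2
        · have := hinj (a₁ := (k', true)) (a₂ := (k, true)) (by simp [← h1, ← h2])
          simpa using congrArg Prod.fst this
        · have := hinj (a₁ := (k', true)) (a₂ := (k, false)) (by simp [← h1, ← h2])
          simpa using congrArg Prod.fst this
        · have := hinj (a₁ := (k', false)) (a₂ := (k, true)) (by simp [← h1, ← h2])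
          simpa using congrArg Prod.fst this
        · have := hinj (a₁ := (k', false)) (a₂ := (k, false)) (by simp [← h1, ← h2])
          simpa using congrArg Prod.fst this
      rw [this]
  rw [← Finset.sum_fiberwise_of_maps_to hmaps (fun g => ∏ k, B (g k))]
  rw [Finset.sum_mul]
  refine Finset.sum_congr rfl fun q hq => ?_
  rw [Finset.mem_filter] at hq
  obtain ⟨-, hqlt, hqm⟩ := hq
  -- each g in the fiber gives the same product
  have hw : ∀ g ∈ ((Fintype.piFinset (fun _ : Fin n =>
      Finset.univ.filter (fun p : Fin m × Fin m => p.1 < p.2))).filter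
      (fun g => Finset.univ.filter (fun i : Fin m => ∀ k, i ≠ (g k).1 ∧ i ≠ (g k).2) = ∅)).filter
      (fun g => Finset.image g Finset.univ = q),
      (∏ k, B (g k)) = ∏ p ∈ q, B p := by
    intro g hg
    rw [Finset.mem_filter, Finset.mem_filter] at hg
    obtain ⟨⟨hg1, hg2⟩, hg3⟩ := hg
    have hglt : ∀ k, (g k).1 < (g k).2 := by
      intro k
      have := Fintype.mem_piFinset.1 hg1 k
      simpa using this
    have hcov : ∀ i : Fin m, ∃ k, i = (g k).1 ∨ i = (g k).2 := by
      intro i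
      by_contra hc
      push_neg at hc
      have : i ∈ Finset.univ.filter (fun i : Fin m => ∀ k, i ≠ (g k).1 ∧ i ≠ (g k).2) := by
        simp only [Finset.mem_filter, Finset.mem_univ, true_and]
        exact fun k => ⟨(hc k).1, (hc k).2⟩
      rw [hg2] at this
      exact absurd this (Finset.notMem_empty i)
    have hginj := g_injective m n hmn g hglt hcov
    rw [← hg3, Finset.prod_image (fun x _ y _ h => hginj h)]
  rw [Finset.sum_congr rfl hw, Finset.sum_const, Finset.filter_filter,
    fiber_card m n hmn q hqlt hqm, nsmul_eq_mul, mul_comm]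
end

section
/- With a_{p,2k} as in the non-adjacent even-interval covering count, the generating function f(x,y) = ∑_{p≥0} ∑_{q=0}^{p} a_{p,p−q} x^p y^q satisfies f(x,y) = 1 / (1 − x y − x⁵ y / (1 − x²)) as an identity of formal power series. -/
/-- Box configurations covering `k2` points of `{1,…,p−1}` (boxes recorded as
`(start, length)`, even length ≥ 4, pairwise non-adjacent). -/
def boxConfigs (p k2 : ℕ) : Finset (Finset (ℕ × ℕ)) :=
  ((Finset.Icc 1 p ×ˢ Finset.Icc 0 p).powerset).filter (fun F =>
    (∀ b ∈ F, 1 ≤ b.1 ∧ 4 ≤ b.2 ∧ Even b.2 ∧ b.1 + b.2 ≤ p) ∧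
    (∀ b ∈ F, ∀ b' ∈ F, b ≠ b' → b.1 + b.2 < b'.1 ∨ b'.1 + b'.2 < b.1) ∧
    (∑ b ∈ F, b.2) = k2)

/-- The covering numbers `a_{p,2k}`. -/
def a (p k2 : ℕ) : ℕ := (boxConfigs p k2).card

/-- The two-variable generating function `f(x,y) = ∑_{p,q} a_{p,p−q} x^p y^q`,
as a multivariate formal power series in `X 0 = x`, `X 1 = y`. -/
noncomputable def f : MvPowerSeries (Fin 2) ℚ :=
  fun d => if d 1 ≤ d 0 then (a (d 0) (d 0 - d 1) : ℚ) else 0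

/-!
A family of boxes in `{1, …, p}` either leaves `p` uncovered, or ends with a box of even
length `2 j + 4` covering `p`, which is preceded by an uncovered point. Hence
`a (p + 1) k = a p k + ∑ⱼ a (p - 2 j - 4) (k - 2 j - 4)`, i.e. `f = 1 + x y (f + T)`, where `T`
collects the families ending in a box and satisfies `(1 - x²) T = x⁴ f`. Eliminating `T` gives
the identity.
-/

open Finset

lemma mem_boxConfigs {p k : ℕ} {F : Finset (ℕ × ℕ)} :
    F ∈ boxConfigs p k ↔
      (∀ b ∈ F, 1 ≤ b.1 ∧ 4 ≤ b.2 ∧ Even b.2 ∧ b.1 + b.2 ≤ p) ∧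
      (∀ b ∈ F, ∀ b' ∈ F, b ≠ b' → b.1 + b.2 < b'.1 ∨ b'.1 + b'.2 < b.1) ∧
      ∑ b ∈ F, b.2 = k := by
  rw [boxConfigs, mem_filter, mem_powerset, and_iff_right_iff_imp]
  rintro ⟨hbox, -, -⟩ b hb
  have := hbox b hb
  simp only [mem_product, mem_Icc]
  omega

lemma boxConfigs_zero_right (p : ℕ) : boxConfigs p 0 = {∅} := by
  ext F
  simp only [mem_boxConfigs, mem_singleton, sum_eq_zero_iff]
  constructor
  · rintro ⟨hbox, -, hsum⟩
    refine eq_empty_of_forall_notMem fun b hb => ?_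
    have := (hbox b hb).2.1
    have := hsum b hb
    omega
  · rintro rfl
    simp

lemma a_zero_right (p : ℕ) : a p 0 = 1 := by
  rw [a, boxConfigs_zero_right, card_singleton]

lemma le_sub_one_of_mem_boxConfigs {p k : ℕ} {F : Finset (ℕ × ℕ)} (hF : F ∈ boxConfigs p k) :
    k ≤ p - 1 := by
  obtain ⟨hbox, hsep, rfl⟩ := mem_boxConfigs.1 hF
  have hdisj : (F : Set (ℕ × ℕ)).PairwiseDisjoint fun b => Ico b.1 (b.1 + b.2) := by
    intro b hb b' hb' hne
    have := hsep b hb b' hb' hne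
    simp only [Function.onFun, disjoint_left, mem_Ico]
    omega
  have hsub : F.biUnion (fun b => Ico b.1 (b.1 + b.2)) ⊆ Ico 1 p := by
    intro x hx
    simp only [mem_biUnion, mem_Ico] at hx ⊢
    obtain ⟨b, hb, hx⟩ := hx
    have := hbox b hb
    omega
  calc ∑ b ∈ F, b.2 = ∑ b ∈ F, #(Ico b.1 (b.1 + b.2)) := by simp
    _ = #(F.biUnion fun b => Ico b.1 (b.1 + b.2)) := (card_biUnion hdisj).symm
    _ ≤ #(Ico 1 p) := card_le_card hsub
    _ = p - 1 := Nat.card_Ico 1 p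

lemma a_self_succ (p : ℕ) : a (p + 1) (p + 1) = 0 :=
  card_eq_zero.2 <| eq_empty_of_forall_notMem fun _ hF => by
    have := le_sub_one_of_mem_boxConfigs hF
    omega

lemma erase_mem_boxConfigs {p k m : ℕ} {F : Finset (ℕ × ℕ)} (hF : F ∈ boxConfigs (p + 1) k)
    (hB : (p + 1 - m, m) ∈ F) : F.erase (p + 1 - m, m) ∈ boxConfigs (p - m) (k - m) := by
  obtain ⟨hbox, hsep, hsum⟩ := mem_boxConfigs.1 hF
  have hBbox := hbox _ hB
  refine mem_boxConfigs.2 ⟨fun b hb => ?_, fun b hb b' hb' => hsep b (mem_of_mem_erase hb) b'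
    (mem_of_mem_erase hb'), ?_⟩
  · obtain ⟨hne, hbF⟩ := mem_erase.1 hb
    obtain ⟨h1, h4, heven, hle⟩ := hbox b hbF
    have := hsep b hbF _ hB hne
    simp only at hBbox this
    exact ⟨h1, h4, heven, by omega⟩
  · have := add_sum_erase F (fun b => b.2) hB
    simp only at this
    omega

lemma notMem_boxConfigs_of_sub {p k m : ℕ} {G : Finset (ℕ × ℕ)} (hG : G ∈ boxConfigs (p - m) k) :
    (p + 1 - m, m) ∉ G := fun h => by
  have := ((mem_boxConfigs.1 hG).1 _ h)
  simp only at this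
  omega

lemma insert_mem_boxConfigs {p k m : ℕ} {G : Finset (ℕ × ℕ)} (hG : G ∈ boxConfigs (p - m) (k - m))
    (hm : 4 ≤ m) (hm' : Even m) (hmp : m ≤ p) (hmk : m ≤ k) :
    insert (p + 1 - m, m) G ∈ boxConfigs (p + 1) k := by
  obtain ⟨hbox, hsep, hsum⟩ := mem_boxConfigs.1 hG
  refine mem_boxConfigs.2 ⟨fun b hb => ?_, fun b hb b' hb' hne => ?_, ?_⟩
  · rcases mem_insert.1 hb with rfl | hb
    · exact ⟨by omega, hm, hm', by omega⟩
    · have := hbox b hb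
      exact ⟨this.1, this.2.1, this.2.2.1, by omega⟩
  · rcases mem_insert.1 hb with rfl | hb <;> rcases mem_insert.1 hb' with rfl | hb'
    · exact absurd rfl hne
    · have := hbox b' hb'
      omega
    · have := hbox b hb
      omega
    · exact hsep b hb b' hb' hne
  · rw [sum_insert (notMem_boxConfigs_of_sub hG), hsum]
    omega

lemma card_filter_mem_boxConfigs {p k m : ℕ} (hm : 4 ≤ m) (hm' : Even m) (hmp : m ≤ p) :
    #{F ∈ boxConfigs (p + 1) k | (p + 1 - m, m) ∈ F} =
      if m ≤ k then a (p - m) (k - m) else 0 := by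
  split_ifs with hmk
  · refine card_bij' (fun F _ => F.erase (p + 1 - m, m)) (fun G _ => insert (p + 1 - m, m) G)
      (fun F hF => erase_mem_boxConfigs (mem_filter.1 hF).1 (mem_filter.1 hF).2)
      (fun G hG => mem_filter.2 ⟨insert_mem_boxConfigs hG hm hm' hmp hmk, mem_insert_self _ _⟩)
      (fun F hF => insert_erase (mem_filter.1 hF).2)
      (fun G hG => erase_insert (notMem_boxConfigs_of_sub hG))
  · refine card_eq_zero.2 <| filter_eq_empty_iff.2 fun F hF hB => hmk ?_
    rw [← (mem_boxConfigs.1 hF).2.2]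
    exact single_le_sum (f := fun b => b.2) (fun _ _ => Nat.zero_le _) hB

lemma a_succ (p k : ℕ) :
    a (p + 1) k = a p k + ∑ j ∈ range ((p - 2) / 2),
      if 2 * j + 4 ≤ k then a (p - (2 * j + 4)) (k - (2 * j + 4)) else 0 := by
  have hinner : {F ∈ boxConfigs (p + 1) k | ∀ b ∈ F, b.1 + b.2 ≤ p} = boxConfigs p k := by
    ext F
    simp only [mem_filter, mem_boxConfigs]
    constructor
    · rintro ⟨⟨hbox, hsep, hsum⟩, hlt⟩
      exact ⟨fun b hb => ⟨(hbox b hb).1, (hbox b hb).2.1, (hbox b hb).2.2.1, hlt b hb⟩, hsep, hsum⟩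
    · rintro ⟨hbox, hsep, hsum⟩
      refine ⟨⟨fun b hb => ?_, hsep, hsum⟩, fun b hb => (hbox b hb).2.2.2⟩
      obtain ⟨h1, h4, heven, hle⟩ := hbox b hb
      exact ⟨h1, h4, heven, by omega⟩
  have hlast : {F ∈ boxConfigs (p + 1) k | ¬ ∀ b ∈ F, b.1 + b.2 ≤ p} =
      (range ((p - 2) / 2)).biUnion
        fun j => {F ∈ boxConfigs (p + 1) k | (p + 1 - (2 * j + 4), 2 * j + 4) ∈ F} := by
    ext F
    simp only [mem_filter, mem_biUnion, mem_range, not_forall, not_le]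
    constructor
    · rintro ⟨hF, b, hb, hend⟩
      obtain ⟨h1, h4, ⟨r, hr⟩, hle⟩ := (mem_boxConfigs.1 hF).1 b hb
      refine ⟨r - 2, by omega, hF, ?_⟩
      convert hb using 1
      ext <;> simp only <;> omega
    · rintro ⟨j, hj, hF, hB⟩
      exact ⟨hF, _, hB, by omega⟩
  have hdisj : (range ((p - 2) / 2) : Set ℕ).PairwiseDisjoint
      fun j => {F ∈ boxConfigs (p + 1) k | (p + 1 - (2 * j + 4), 2 * j + 4) ∈ F} := by
    intro i hi j hj hij
    simp only [Function.onFun, disjoint_left, mem_filter]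
    rintro F ⟨hF, hi⟩ ⟨-, hj⟩
    have := (mem_boxConfigs.1 hF).2.1 _ hi _ hj (by simp [hij])
    simp only [coe_range, Set.mem_Iio] at *
    omega
  rw [a, ← card_filter_add_card_filter_not (fun F => ∀ b ∈ F, b.1 + b.2 ≤ p), hinner,
    hlast, card_biUnion hdisj, a]
  refine congrArg _ (sum_congr rfl fun j hj => card_filter_mem_boxConfigs (by omega)
    ⟨j + 2, by omega⟩ ?_)
  rw [mem_range] at hj
  omega

namespace MvPowerSeries

theorem coeff_X_pow_mul' {σ R : Type*} [CommSemiring R] [DecidableEq σ] (s : σ) (n : ℕ)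
    (φ : MvPowerSeries σ R) (d : σ →₀ ℕ) :
    coeff d (X s ^ n * φ) = if n ≤ d s then coeff (d - Finsupp.single s n) φ else 0 := by
  rw [X_pow_eq, coeff_monomial_mul, one_mul]
  exact if_congr Finsupp.single_le_iff rfl rfl

end MvPowerSeries

open MvPowerSeries

section Bivariate

variable {R : Type*}

def bivariate (c : ℕ → ℕ → R) : MvPowerSeries (Fin 2) R := fun d => c (d 0) (d 1)

@[simp]
lemma coeff_bivariate [Semiring R] (c : ℕ → ℕ → R) (d : Fin 2 →₀ ℕ) :
    coeff d (bivariate c) = c (d 0) (d 1) := rfl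

lemma bivariate_add [Semiring R] (c c' : ℕ → ℕ → R) :
    bivariate c + bivariate c' = bivariate fun p q => c p q + c' p q := rfl

lemma bivariate_sub [Ring R] (c c' : ℕ → ℕ → R) :
    bivariate c - bivariate c' = bivariate fun p q => c p q - c' p q := rfl

variable [CommSemiring R]

lemma one_eq_bivariate :
    (1 : MvPowerSeries (Fin 2) R) = bivariate fun p q => if p = 0 ∧ q = 0 then 1 else 0 := by
  ext d
  rw [coeff_one]
  congr 1
  simp only [Finsupp.ext_iff, Fin.forall_fin_two, Finsupp.coe_zero, Pi.zero_apply]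

lemma X_zero_pow_mul_bivariate (i : ℕ) (c : ℕ → ℕ → R) :
    X 0 ^ i * bivariate c = bivariate fun p q => if i ≤ p then c (p - i) q else 0 := by
  ext d
  simp [coeff_X_pow_mul']

lemma X_one_pow_mul_bivariate (j : ℕ) (c : ℕ → ℕ → R) :
    X 1 ^ j * bivariate c = bivariate fun p q => if j ≤ q then c p (q - j) else 0 := by
  ext d
  simp [coeff_X_pow_mul']

end Bivariate

/-- The coefficient of `x^p y^q` in `f`; `q` counts the points of `{1, …, p}` left uncovered,
`p` included. -/
def fCoeff (p q : ℕ) : ℚ := if q ≤ p then (a p (p - q) : ℚ) else 0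

lemma f_eq_bivariate : f = bivariate fCoeff := rfl

lemma fCoeff_zero_left (q : ℕ) : fCoeff 0 q = if q = 0 then 1 else 0 := by
  simp [fCoeff, a_zero_right]

lemma fCoeff_succ_zero (p : ℕ) : fCoeff (p + 1) 0 = 0 := by
  simp [fCoeff, a_self_succ]

/-- Families of `{1, …, p}` whose last box ends at `p`, summed over the box length `2 j + 4`. -/
def endBoxCoeff (p q : ℕ) : ℚ := ∑ j ∈ range ((p - 2) / 2), fCoeff (p - (2 * j + 4)) q

lemma fCoeff_succ_succ (p q : ℕ) : fCoeff (p + 1) (q + 1) = fCoeff p q + endBoxCoeff p q := by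
  unfold fCoeff endBoxCoeff
  by_cases hqp : q ≤ p
  · rw [if_pos (by omega), if_pos hqp, Nat.add_sub_add_right, a_succ]
    push_cast
    congr 1
    refine sum_congr rfl fun j hj => ?_
    rw [mem_range] at hj
    unfold fCoeff
    by_cases hjq : 2 * j + 4 ≤ p - q
    · rw [if_pos hjq, if_pos (by omega)]
      congr 2
      omega
    · rw [if_neg hjq, if_neg (by omega)]
  · rw [if_neg (by omega), if_neg hqp, zero_add, eq_comm]
    exact sum_eq_zero fun j _ => if_neg (by omega)

lemma endBoxCoeff_add_two (p q : ℕ) :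
    endBoxCoeff (p + 2) q = endBoxCoeff p q + if 2 ≤ p then fCoeff (p - 2) q else 0 := by
  unfold endBoxCoeff
  rcases Nat.lt_or_ge p 2 with hp | hp
  · rw [if_neg (by omega), show (p + 2 - 2) / 2 = 0 by omega, show (p - 2) / 2 = 0 by omega]
    simp
  · rw [if_pos hp, show (p + 2 - 2) / 2 = (p - 2) / 2 + 1 by omega, sum_range_succ']
    congr 1
    exact sum_congr rfl fun j _ => by congr 1; omega

noncomputable def endBoxSeries : MvPowerSeries (Fin 2) ℚ := bivariate endBoxCoeff

lemma f_eq_one_add : f = 1 + X 0 * X 1 * (f + endBoxSeries) := by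
  rw [f_eq_bivariate, endBoxSeries, bivariate_add, mul_assoc, ← pow_one (X 1),
    X_one_pow_mul_bivariate, ← pow_one (X 0), X_zero_pow_mul_bivariate, one_eq_bivariate,
    bivariate_add]
  congr 1
  funext p q
  rcases p with _ | p <;> rcases q with _ | q <;>
    simp [fCoeff_zero_left, fCoeff_succ_zero, fCoeff_succ_succ]

lemma one_sub_X_sq_mul_endBoxSeries : (1 - X 0 ^ 2) * endBoxSeries = X 0 ^ 4 * f := by
  rw [sub_mul, one_mul, endBoxSeries, f_eq_bivariate, X_zero_pow_mul_bivariate,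
    X_zero_pow_mul_bivariate, bivariate_sub]
  congr 1
  funext p q
  rcases p with _ | _ | p
  · simp [endBoxCoeff]
  · simp [endBoxCoeff]
  · rw [show p + 1 + 1 = p + 2 from rfl, endBoxCoeff_add_two, if_pos (show 2 ≤ p + 2 by omega),
      Nat.add_sub_cancel, add_sub_cancel_left]
    exact if_congr (by omega) (by congr 1) rfl

open MvPowerSeries in
/-- Generating function identity `f(x,y) = 1/(1 − xy − x⁵y/(1−x²))`, stated in the
denominator-cleared form `f · ((1−x²)(1−xy) − x⁵y) = 1 − x²`. -/
theorem generating_function_identity :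
    f * (1 - (X 0 : MvPowerSeries (Fin 2) ℚ) ^ 2 - X 0 * X 1 + X 0 ^ 3 * X 1
          - X 0 ^ 5 * X 1) =
      1 - (X 0 : MvPowerSeries (Fin 2) ℚ) ^ 2 := by
  linear_combination (1 - X 0 ^ 2) * f_eq_one_add + X 0 * X 1 * one_sub_X_sq_mul_endBoxSeries
end

section
/- Let x₁ be the smallest positive real root of the polynomial P(x) = 2x⁵ − 2x³ + x² + 2x − 1. Then P has exactly one root in the real interval (0,1), and 0.470 < x₁ < 0.471; moreover every other complex root z of P satisfies |z| > x₁. -/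
/-!
On `[0, ∞)` the difference quotient of `P` is positive, so `P` is strictly increasing there;
a sign change between `0.470` and `0.471` then pins down its unique root `a` in `(0, 1)`.
Any other complex root `z` is a root of the quartic `P(z) / (z - a)`, whose constant term
`2a⁴ - 2a² + a + 2` exceeds `∑ |cₖ| aᵏ = 4a⁴ + a` over its other coefficients as soon as
`a⁴ + a² < 1`; so the quartic has no root in the closed disc of radius `a`.
-/

def inchwormPoly {R : Type*} [CommRing R] (x : R) : R :=
  2 * x ^ 5 - 2 * x ^ 3 + x ^ 2 + 2 * x - 1

/-- The quotient `(P z - P a) / (z - a)`, as a polynomial in `z`. -/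
def inchwormQuot {R : Type*} [CommRing R] (a z : R) : R :=
  2 * z ^ 4 + 2 * a * z ^ 3 + (2 * a ^ 2 - 2) * z ^ 2 + (2 * a ^ 3 - 2 * a + 1) * z +
    (2 * a ^ 4 - 2 * a ^ 2 + a + 2)

lemma inchwormPoly_sub_inchwormPoly {R : Type*} [CommRing R] (a z : R) :
    inchwormPoly z - inchwormPoly a = (z - a) * inchwormQuot a z := by
  unfold inchwormPoly inchwormQuot
  ring

lemma inchwormQuot_pos {x y : ℝ} (hx : 0 ≤ x) (hy : 0 ≤ y) :
    0 < inchwormQuot x y := by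
  unfold inchwormQuot
  nlinarith [sq_nonneg (x + y), sq_nonneg (x - y), sq_nonneg (x * y - 3 / 10),
    sq_nonneg (x ^ 2 + y ^ 2 - 3 / 5), mul_nonneg hx hy, sq_nonneg (x ^ 2 - y ^ 2),
    sq_nonneg (x * y)]

lemma strictMonoOn_inchwormPoly : StrictMonoOn (inchwormPoly : ℝ → ℝ) (Set.Ici 0) := by
  intro x hx y hy hxy
  rw [← sub_pos, inchwormPoly_sub_inchwormPoly]
  exact mul_pos (sub_pos.2 hxy) (inchwormQuot_pos hx hy)

lemma continuous_inchwormPoly : Continuous (inchwormPoly : ℝ → ℝ) := by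
  unfold inchwormPoly
  fun_prop

lemma inchwormPoly_0470_neg : inchwormPoly (0.470 : ℝ) < 0 := by
  norm_num [inchwormPoly]

lemma inchwormPoly_0471_pos : 0 < inchwormPoly (0.471 : ℝ) := by
  norm_num [inchwormPoly]

lemma exists_inchwormPoly_eq_zero : ∃ x ∈ Set.Ioo (0.470 : ℝ) 0.471, inchwormPoly x = 0 :=
  intermediate_value_Ioo (by norm_num) continuous_inchwormPoly.continuousOn
    ⟨inchwormPoly_0470_neg, inchwormPoly_0471_pos⟩

lemma mem_Ioo_of_inchwormPoly_eq_zero {x : ℝ} (hx : x ∈ Set.Ioo (0 : ℝ) 1)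
    (hroot : inchwormPoly x = 0) : x ∈ Set.Ioo (0.470 : ℝ) 0.471 := by
  have hx' : x ∈ Set.Ici (0 : ℝ) := le_of_lt hx.1
  constructor
  · refine (strictMonoOn_inchwormPoly.lt_iff_lt (by norm_num) hx').1 ?_
    linarith [inchwormPoly_0470_neg]
  · refine (strictMonoOn_inchwormPoly.lt_iff_lt hx' (by norm_num)).1 ?_
    linarith [inchwormPoly_0471_pos]

lemma inchwormQuot_eq_zero {R : Type*} [CommRing R] [NoZeroDivisors R] {a z : R}
    (ha : inchwormPoly a = 0) (hz : inchwormPoly z = 0) (hne : z ≠ a) :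
    inchwormQuot a z = 0 := by
  have hfactor := inchwormPoly_sub_inchwormPoly a z
  rw [ha, hz, sub_zero, eq_comm] at hfactor
  exact (mul_eq_zero.1 hfactor).resolve_left (sub_ne_zero.2 hne)

lemma sum_mul_pow_ne_zero_of_abs_const_gt {n : ℕ} (c : Fin (n + 1) → ℝ) {z : ℂ} {r : ℝ}
    (hz : ‖z‖ ≤ r) (hc : ∑ k : Fin n, |c k.succ| * r ^ (k + 1 : ℕ) < |c 0|) :
    ∑ k, (c k : ℂ) * z ^ (k : ℕ) ≠ 0 := by
  intro hsum
  rw [Fin.sum_univ_succ] at hsum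
  have hconst : (c 0 : ℂ) = -∑ k : Fin n, (c k.succ : ℂ) * z ^ (k + 1 : ℕ) := by
    simpa [eq_neg_iff_add_eq_zero] using hsum
  have : |c 0| ≤ ∑ k : Fin n, |c k.succ| * r ^ (k + 1 : ℕ) :=
    calc |c 0| = ‖∑ k : Fin n, (c k.succ : ℂ) * z ^ (k + 1 : ℕ)‖ := by
          rw [← Real.norm_eq_abs, ← Complex.norm_real, hconst, norm_neg]
      _ ≤ ∑ k : Fin n, ‖(c k.succ : ℂ) * z ^ (k + 1 : ℕ)‖ := norm_sum_le _ _
      _ ≤ ∑ k : Fin n, |c k.succ| * r ^ (k + 1 : ℕ) := by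
          gcongr with k
          rw [norm_mul, norm_pow, Complex.norm_real, Real.norm_eq_abs]
          gcongr
  linarith

lemma lt_norm_of_inchwormQuot_eq_zero {a : ℝ} (ha : 0 ≤ a) (ha' : a ^ 4 + a ^ 2 < 1) {z : ℂ}
    (hz : inchwormQuot (a : ℂ) z = 0) : a < ‖z‖ := by
  by_contra! hle
  have hc₀ : 0 < 2 * a ^ 4 - 2 * a ^ 2 + a + 2 := by nlinarith
  have hc₁ : 0 ≤ 2 * a ^ 3 - 2 * a + 1 := by nlinarith [sq_nonneg (a - 1 / 2)]
  have hc₂ : 2 * a ^ 2 - 2 ≤ 0 := by nlinarith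
  refine sum_mul_pow_ne_zero_of_abs_const_gt
    ![2 * a ^ 4 - 2 * a ^ 2 + a + 2, 2 * a ^ 3 - 2 * a + 1, 2 * a ^ 2 - 2, 2 * a, 2] hle ?_ ?_
  · simp [Fin.sum_univ_four, abs_of_pos hc₀, abs_of_nonneg hc₁, abs_of_nonpos hc₂,
      abs_of_nonneg ha]
    nlinarith
  · simp [Fin.sum_univ_five]
    unfold inchwormQuot at hz
    linear_combination hz

/-- Root location for `P(x) = 2x⁵ − 2x³ + x² + 2x − 1`: it has a unique root in the
real interval `(0,1)`, that root `x₁` satisfies `0.470 < x₁ < 0.471`, and every other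
complex root has modulus strictly greater than `x₁`. -/
theorem root_location :
    (∃! x : ℝ, x ∈ Set.Ioo (0 : ℝ) 1 ∧
        2 * x ^ 5 - 2 * x ^ 3 + x ^ 2 + 2 * x - 1 = 0) ∧
    ∀ x₁ : ℝ, x₁ ∈ Set.Ioo (0 : ℝ) 1 →
      2 * x₁ ^ 5 - 2 * x₁ ^ 3 + x₁ ^ 2 + 2 * x₁ - 1 = 0 →
      (0.470 < x₁ ∧ x₁ < 0.471 ∧
        ∀ z : ℂ, 2 * z ^ 5 - 2 * z ^ 3 + z ^ 2 + 2 * z - 1 = 0 → z ≠ (x₁ : ℂ) →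
          x₁ < ‖z‖) := by
  obtain ⟨x₀, hx₀, hroot₀⟩ := exists_inchwormPoly_eq_zero
  have hx₀_pos : 0 < x₀ := by linarith [hx₀.1]
  refine ⟨⟨x₀, ⟨⟨hx₀_pos, by linarith [hx₀.2]⟩, hroot₀⟩, ?_⟩, ?_⟩
  · rintro y ⟨hy, hroot : inchwormPoly y = 0⟩
    exact strictMonoOn_inchwormPoly.injOn hy.1.le hx₀_pos.le (hroot.trans hroot₀.symm)
  intro a ha (hroot : inchwormPoly a = 0)
  have ha' := mem_Ioo_of_inchwormPoly_eq_zero ha hroot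
  have hsq : a ^ 2 < 1 / 4 := by nlinarith [ha'.2, ha.1]
  have hrootℂ : inchwormPoly (a : ℂ) = 0 := by
    unfold inchwormPoly at hroot ⊢
    exact_mod_cast hroot
  exact ⟨ha'.1, ha'.2, fun z hz hne =>
    lt_norm_of_inchwormQuot_eq_zero ha.1.le (by nlinarith) (inchwormQuot_eq_zero hrootℂ hz hne)⟩
end

section
/- For a finite measure-like additive set function μ on subsets of a finite set S and subsets A₁,...,Aₙ ⊆ S, μ(S \ ⋃ᵢ Aᵢ) = ∑_{T ⊆ {1,...,n}} (−1)^{|T|} μ(⋂_{i∈T} Aᵢ), where the empty intersection is S. Specialize: if S is the set of ordered m/2-tuples of pairs (x_l, y_l) with x_l = s_{j}, y_l = s_{k}, j < k, drawn from {s₁,...,s_m} (repetition allowed), μ assigns to a set E the sum over its elements of ∏_l B(x_l, y_l), and Aᵢ is the subset of tuples avoiding s_i, then μ(S \ ⋃_{i=1}^m A_i) = (m/2)! · ∑ over perfect matchings q of {s₁,...,s_m} of ∏_{(s_j,s_k)∈q} B(s_j,s_k). -/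
open scoped Classical

/-- The set `S` of ordered `(m/2)`-tuples of ordered pairs drawn from `Fin m`
(repetitions allowed). -/
def tuples (m : ℕ) : Finset (Fin (m / 2) → Fin m × Fin m) :=
  Finset.univ.filter (fun t => ∀ l, (t l).1 < (t l).2)

/-- `A_i`: the tuples in `S` avoiding the point `i`. -/
def avoid (m : ℕ) (i : Fin m) : Finset (Fin (m / 2) → Fin m × Fin m) :=
  Finset.univ.filter (fun t =>
    (∀ l, (t l).1 < (t l).2) ∧ ∀ l, (t l).1 ≠ i ∧ (t l).2 ≠ i)

/-- The additive set function `μ(E) = ∑_{tuple ∈ E} ∏_l B(x_l, y_l)`. -/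
noncomputable def mu (m : ℕ) (B : Fin m × Fin m → ℂ)
    (E : Finset (Fin (m / 2) → Fin m × Fin m)) : ℂ :=
  ∑ t ∈ E, ∏ l, B (t l)

/- ########## auxiliary lemmas ########## -/

lemma mu_empty_aux {X : Type} [DecidableEq X] (μ : Finset X → ℂ)
    (hadd : ∀ E₁ E₂ : Finset X, Disjoint E₁ E₂ → μ (E₁ ∪ E₂) = μ E₁ + μ E₂) :
    μ ∅ = 0 := by
  have h := hadd ∅ ∅ (by simp)
  simp only [Finset.union_empty] at h
  exact (left_eq_add.mp h)

lemma mu_sum_aux {X : Type} [DecidableEq X] (μ : Finset X → ℂ)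
    (hadd : ∀ E₁ E₂ : Finset X, Disjoint E₁ E₂ → μ (E₁ ∪ E₂) = μ E₁ + μ E₂)
    (E : Finset X) : μ E = ∑ x ∈ E, μ {x} := by
  induction E using Finset.cons_induction with
  | empty => simpa using mu_empty_aux μ hadd
  | cons a s ha ih =>
    have h := hadd {a} s (by simpa using ha)
    rw [Finset.cons_eq_insert, Finset.insert_eq, h, ih, ← Finset.insert_eq,
      Finset.sum_insert ha]

lemma incl_excl_aux {X : Type} [Fintype X] [DecidableEq X] (μ : Finset X → ℂ)
    (hadd : ∀ E₁ E₂ : Finset X, Disjoint E₁ E₂ → μ (E₁ ∪ E₂) = μ E₁ + μ E₂)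
    (n : ℕ) (S : Finset X) (A : Fin n → Finset X) (hA : ∀ i, A i ⊆ S) :
    μ (S \ Finset.univ.biUnion A) =
      ∑ T : Finset (Fin n), (-1 : ℂ) ^ T.card * μ (S ∩ T.inf A) := by
  have key := mu_sum_aux μ hadd
  -- index set of x
  set I : X → Finset (Fin n) := fun x => Finset.univ.filter (fun i => x ∈ A i) with hI
  have step : ∀ T : Finset (Fin n),
      μ (S ∩ T.inf A) = ∑ x ∈ S, if T ⊆ I x then μ {x} else 0 := by
    intro T
    rw [key, ← Finset.sum_filter]
    apply Finset.sum_congr _ (fun _ _ => rfl)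
    rw [← Finset.filter_mem_eq_inter]
    apply Finset.filter_congr
    intro x hx
    simp only [Finset.mem_inf, hI, Finset.subset_iff, Finset.mem_filter, Finset.mem_univ,
      true_and]
  calc μ (S \ Finset.univ.biUnion A)
      = ∑ x ∈ S, if I x = ∅ then μ {x} else 0 := by
        rw [key, ← Finset.sum_filter]
        apply Finset.sum_congr _ (fun _ _ => rfl)
        rw [Finset.sdiff_eq_filter]
        apply Finset.filter_congr
        intro x hx
        simp [hI, Finset.eq_empty_iff_forall_notMem, Finset.mem_biUnion]
    _ = ∑ x ∈ S, ((∑ T ∈ (I x).powerset, (-1 : ℂ) ^ T.card) * μ {x}) := by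
        apply Finset.sum_congr rfl
        intro x _
        have : (∑ T ∈ (I x).powerset, (-1 : ℂ) ^ T.card)
            = ((∑ T ∈ (I x).powerset, (-1 : ℤ) ^ T.card : ℤ) : ℂ) := by push_cast; ring_nf
        rw [this, Finset.sum_powerset_neg_one_pow_card]
        split <;> simp
    _ = ∑ x ∈ S, ∑ T : Finset (Fin n), (if T ⊆ I x then (-1 : ℂ) ^ T.card * μ {x} else 0) := by
        apply Finset.sum_congr rfl
        intro x _
        rw [Finset.sum_mul, ← Finset.sum_filter]
        apply Finset.sum_congr _ (fun _ _ => rfl)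
        ext T
        simp [Finset.mem_powerset]
    _ = ∑ T : Finset (Fin n), (-1 : ℂ) ^ T.card * μ (S ∩ T.inf A) := by
        rw [Finset.sum_comm]
        apply Finset.sum_congr rfl
        intro T _
        rw [step T, Finset.mul_sum]
        apply Finset.sum_congr rfl
        intro x _
        split <;> simp

/-- membership in `S \ ⋃ Aᵢ`. -/
lemma mem_good_aux (m : ℕ) (t : Fin (m / 2) → Fin m × Fin m) :
    t ∈ tuples m \ Finset.univ.biUnion (avoid m) ↔
      (∀ l, (t l).1 < (t l).2) ∧ ∀ i, ∃ l, (t l).1 = i ∨ (t l).2 = i := by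
  simp only [tuples, avoid, Finset.mem_sdiff, Finset.mem_filter, Finset.mem_univ, true_and,
    Finset.mem_biUnion, not_exists]
  constructor
  · rintro ⟨h1, h2⟩
    refine ⟨h1, fun i => ?_⟩
    have := h2 i
    push_neg at this
    obtain ⟨l, hl⟩ := this h1
    exact ⟨l, by tauto⟩
  · rintro ⟨h1, h2⟩
    refine ⟨h1, fun i => ?_⟩
    rintro ⟨-, h3⟩
    obtain ⟨l, hl⟩ := h2 i
    rcases hl with h | h
    · exact (h3 l).1 h
    · exact (h3 l).2 h

section Spec

variable {m : ℕ}

/-- the matching predicate set. -/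
noncomputable def matchings (m : ℕ) : Finset (Finset (Fin m × Fin m)) :=
  Finset.univ.filter (fun q : Finset (Fin m × Fin m) =>
    (∀ p ∈ q, p.1 < p.2) ∧ ∀ i : Fin m, ∃! p, p ∈ q ∧ (i = p.1 ∨ i = p.2))

lemma card_matching_aux (hme : Even m) {q : Finset (Fin m × Fin m)}
    (hq : q ∈ matchings m) : q.card = m / 2 := by
  obtain ⟨h1, h2⟩ := (Finset.mem_filter.mp hq).2
  have hcover : (Finset.univ : Finset (Fin m)) = q.biUnion (fun p => {p.1, p.2}) := by
    ext i
    simp only [Finset.mem_univ, true_iff, Finset.mem_biUnion, Finset.mem_insert,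
      Finset.mem_singleton]
    obtain ⟨p, ⟨hp, hip⟩, -⟩ := h2 i
    exact ⟨p, hp, by tauto⟩
  have hdisj : ∀ p ∈ q, ∀ p' ∈ q, p ≠ p' →
      Disjoint ({p.1, p.2} : Finset (Fin m)) {p'.1, p'.2} := by
    intro p hp p' hp' hne
    rw [Finset.disjoint_left]
    intro i hi hi'
    simp only [Finset.mem_insert, Finset.mem_singleton] at hi hi'
    obtain ⟨pp, -, huniq⟩ := h2 i
    exact hne ((huniq p ⟨hp, by tauto⟩).trans (huniq p' ⟨hp', by tauto⟩).symm)
  have hcard : m = 2 * q.card := by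
    have hthis := congrArg Finset.card hcover
    rw [Finset.card_univ, Fintype.card_fin, Finset.card_biUnion hdisj] at hthis
    have hsum : (∑ p ∈ q, ({p.1, p.2} : Finset (Fin m)).card) = 2 * q.card := by
      rw [Finset.sum_congr rfl (fun p hp => ?_), Finset.sum_const, smul_eq_mul, mul_comm]
      rw [Finset.card_insert_of_notMem (by simp only [Finset.mem_singleton]; exact (h1 p hp).ne),
        Finset.card_singleton]
    rw [hsum] at hthis
    exact hthis
  omega

lemma sigma_bij_aux (hme : Even m) {t : Fin (m / 2) → Fin m × Fin m}
    (ht : ∀ i, ∃ l, (t l).1 = i ∨ (t l).2 = i) :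
    Function.Bijective (fun lb : Fin (m / 2) × Bool =>
      if lb.2 then (t lb.1).2 else (t lb.1).1) := by
  rw [Fintype.bijective_iff_surjective_and_card]
  constructor
  · intro i
    obtain ⟨l, hl⟩ := ht i
    rcases hl with h | h
    · exact ⟨(l, false), h⟩
    · exact ⟨(l, true), h⟩
  · simp only [Fintype.card_prod, Fintype.card_fin, Fintype.card_bool]
    obtain ⟨k, hk⟩ := hme
    omega

/-- a tuple in the good set is injective, and its image is a matching. -/
lemma image_mem_matchings_aux (hme : Even m) {t : Fin (m / 2) → Fin m × Fin m}
    (ht : t ∈ tuples m \ Finset.univ.biUnion (avoid m)) :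
    Finset.univ.image t ∈ matchings m := by
  obtain ⟨h1, h2⟩ := (mem_good_aux m t).mp ht
  have hσ := (sigma_bij_aux hme h2).1
  refine Finset.mem_filter.mpr ⟨Finset.mem_univ _, ?_, ?_⟩
  · intro p hp
    obtain ⟨l, -, rfl⟩ := Finset.mem_image.mp hp
    exact h1 l
  · intro i
    obtain ⟨l, hl⟩ := h2 i
    refine ⟨t l, ⟨Finset.mem_image_of_mem t (Finset.mem_univ l), by tauto⟩, ?_⟩
    rintro p ⟨hp, hip⟩
    obtain ⟨l', -, rfl⟩ := Finset.mem_image.mp hp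
    rcases hip with h | h <;> rcases hl with h' | h'
    · have := hσ (a₁ := (l', false)) (a₂ := (l, false)) (by simpa using h.symm.trans h'.symm)
      rw [Prod.mk.injEq] at this; rw [this.1]
    · have := hσ (a₁ := (l', false)) (a₂ := (l, true)) (by simpa using h.symm.trans h'.symm)
      rw [Prod.mk.injEq] at this; exact absurd this.2 (by simp)
    · have := hσ (a₁ := (l', true)) (a₂ := (l, false)) (by simpa using h.symm.trans h'.symm)
      rw [Prod.mk.injEq] at this; exact absurd this.2 (by simp)
    · have := hσ (a₁ := (l', true)) (a₂ := (l, true)) (by simpa using h.symm.trans h'.symm)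
      rw [Prod.mk.injEq] at this; rw [this.1]

lemma fiber_mem_aux (hme : Even m) {q : Finset (Fin m × Fin m)} (hq : q ∈ matchings m)
    {t : Fin (m / 2) → Fin m × Fin m} (himg : Finset.univ.image t = q) :
    t ∈ tuples m \ Finset.univ.biUnion (avoid m) := by
  obtain ⟨h1, h2⟩ := (Finset.mem_filter.mp hq).2
  rw [mem_good_aux]
  constructor
  · intro l
    exact h1 (t l) (himg ▸ Finset.mem_image_of_mem t (Finset.mem_univ l))
  · intro i
    obtain ⟨p, ⟨hp, hip⟩, -⟩ := h2 i
    rw [← himg] at hp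
    obtain ⟨l, -, rfl⟩ := Finset.mem_image.mp hp
    exact ⟨l, by tauto⟩

lemma fiber_card_aux (hme : Even m) {q : Finset (Fin m × Fin m)} (hq : q ∈ matchings m) :
    ((tuples m \ Finset.univ.biUnion (avoid m)).filter
      (fun t => Finset.univ.image t = q)).card = Nat.factorial (m / 2) := by
  have hqc : q.card = m / 2 := card_matching_aux hme hq
  -- the fiber equals all functions with image q
  have hfib : (tuples m \ Finset.univ.biUnion (avoid m)).filter
      (fun t => Finset.univ.image t = q)
      = Finset.univ.filter (fun t : Fin (m / 2) → Fin m × Fin m =>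
          Finset.univ.image t = q) := by
    ext t
    simp only [Finset.mem_filter, Finset.mem_univ, true_and, and_iff_right_iff_imp]
    exact fun h => fiber_mem_aux hme hq h
  rw [hfib]
  -- injectivity of any such t
  have hinj : ∀ t : Fin (m / 2) → Fin m × Fin m, Finset.univ.image t = q →
      Function.Injective t := by
    intro t himg
    have : (Finset.univ.image t).card = (Finset.univ : Finset (Fin (m / 2))).card := by
      rw [himg, hqc, Finset.card_univ, Fintype.card_fin]
    have := Finset.card_image_iff.mp this
    intro a b hab
    exact this (Finset.mem_coe.mpr (Finset.mem_univ a)) (Finset.mem_coe.mpr (Finset.mem_univ b)) hab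
  -- bijection with embeddings into q
  have hbij : (Finset.univ.filter (fun t : Fin (m / 2) → Fin m × Fin m =>
      Finset.univ.image t = q)).card
      = (Finset.univ : Finset (Fin (m / 2) ↪ {x // x ∈ q})).card := by
    refine Finset.card_bij
      (fun (t : Fin (m / 2) → Fin m × Fin m)
        (ht : t ∈ Finset.univ.filter (fun t : Fin (m / 2) → Fin m × Fin m =>
          Finset.univ.image t = q)) =>
        (⟨fun l => (⟨t l, by
            have himg := (Finset.mem_filter.mp ht).2
            rw [← himg]; exact Finset.mem_image_of_mem t (Finset.mem_univ l)⟩ :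
            {x // x ∈ q}),
          fun a b hab => hinj t (Finset.mem_filter.mp ht).2 (Subtype.ext_iff.mp hab)⟩ :
          Fin (m / 2) ↪ {x // x ∈ q}))
      (fun t ht => Finset.mem_univ _) ?_ ?_
    · -- injectivity of the map
      intro t ht t' ht' heq
      funext l
      have := congrFun (congrArg
        (fun e : Fin (m / 2) ↪ {x // x ∈ q} => (e : Fin (m / 2) → {x // x ∈ q})) heq) l
      exact Subtype.ext_iff.mp this
    · -- surjectivity
      intro e _
      have himg : Finset.univ.image (fun l => ((e l : {x // x ∈ q}) : Fin m × Fin m)) = q := by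
        have hinj' : Function.Injective (fun l => ((e l : {x // x ∈ q}) : Fin m × Fin m)) :=
          fun a b hab => e.injective (Subtype.ext hab)
        have hsub : Finset.univ.image (fun l => ((e l : {x // x ∈ q}) : Fin m × Fin m)) ⊆ q := by
          intro p hp
          obtain ⟨l, -, rfl⟩ := Finset.mem_image.mp hp
          exact (e l).2
        have hcard : q.card ≤ (Finset.univ.image
            (fun l => ((e l : {x // x ∈ q}) : Fin m × Fin m))).card := by
          rw [Finset.card_image_of_injective _ hinj', Finset.card_univ, Fintype.card_fin, hqc]
        exact Finset.eq_of_subset_of_card_le hsub hcard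
      refine ⟨fun l => (e l : Fin m × Fin m), ?_, ?_⟩
      · simp only [Finset.mem_filter, Finset.mem_univ, true_and]
        exact himg
      · exact Function.Embedding.ext fun l => Subtype.ext rfl
  rw [hbij, Finset.card_univ, Fintype.card_embedding_eq, Fintype.card_coe, Fintype.card_fin,
    hqc, Nat.descFactorial_self]

end Spec

/-- Inclusion-exclusion for an additive set function, together with its
specialization: `μ(S \ ⋃ᵢ Aᵢ) = (m/2)! · ∑_{perfect matchings q} ∏_{(j,k)∈q} B(j,k)`. -/
theorem inclusion_exclusion_and_specialization (m : ℕ) (hm : 0 < m) (hme : Even m)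
    (B : Fin m × Fin m → ℂ) :
    (∀ (X : Type) [Fintype X] [DecidableEq X] (μ : Finset X → ℂ),
      (∀ E₁ E₂ : Finset X, Disjoint E₁ E₂ → μ (E₁ ∪ E₂) = μ E₁ + μ E₂) →
      ∀ (n : ℕ) (S : Finset X) (A : Fin n → Finset X), (∀ i, A i ⊆ S) →
        μ (S \ Finset.univ.biUnion A) =
          ∑ T : Finset (Fin n), (-1 : ℂ) ^ T.card * μ (S ∩ T.inf A)) ∧
    mu m B (tuples m \ Finset.univ.biUnion (avoid m)) =
      (Nat.factorial (m / 2) : ℂ) *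
        ∑ q ∈ Finset.univ.filter (fun q : Finset (Fin m × Fin m) =>
            (∀ p ∈ q, p.1 < p.2) ∧ ∀ i : Fin m, ∃! p, p ∈ q ∧ (i = p.1 ∨ i = p.2)),
          ∏ p ∈ q, B p := by
  constructor
  · intro X _ _ μ hadd n S A hA
    exact incl_excl_aux μ hadd n S A hA
  · have hM : Finset.univ.filter (fun q : Finset (Fin m × Fin m) =>
        (∀ p ∈ q, p.1 < p.2) ∧ ∀ i : Fin m, ∃! p, p ∈ q ∧ (i = p.1 ∨ i = p.2)) = matchings m := rfl
    rw [hM, mu]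
    rw [← Finset.sum_fiberwise_of_maps_to
      (g := fun t => Finset.univ.image t)
      (t := matchings m)
      (fun t ht => image_mem_matchings_aux hme ht)
      (fun t => ∏ l, B (t l))]
    rw [Finset.mul_sum]
    apply Finset.sum_congr rfl
    intro q hq
    have hprod : ∀ t ∈ (tuples m \ Finset.univ.biUnion (avoid m)).filter
        (fun t => Finset.univ.image t = q), (∏ l, B (t l)) = ∏ p ∈ q, B p := by
      intro t ht
      obtain ⟨htG, himg⟩ := Finset.mem_filter.mp ht
      have hσ := (sigma_bij_aux hme ((mem_good_aux m t).mp htG).2).1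
      have hinj : Function.Injective t := by
        intro a b hab
        have := hσ (a₁ := (a, false)) (a₂ := (b, false)) (by simp [hab])
        exact (Prod.mk.injEq _ _ _ _ ▸ this).1
      rw [← himg, Finset.prod_image (fun a _ b _ hab => hinj hab)]
    rw [Finset.sum_congr rfl hprod, Finset.sum_const, fiber_card_aux hme hq, nsmul_eq_mul]
end
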